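/- arXiv:2002.04912 — 2 statements merged into one kernel-verified Lean document; each statement's English description precedes it below -/
import Mathlib

section
/- Let p be an odd prime, let n, k, l be positive integers with l | k and k/l odd, and set d = gcd(n,k), e = gcd(n,l), L = lcm(d,l). Suppose n/d is even and p does not divide k/L. Let a ∈ 𝔽_{p^n}. Then the equation S_l^k(X) = a has a solution in 𝔽_{p^n} if and only if T_e^{2e}(S_d^n(a)) = 0. Moreover, in that case, for any δ ∈ 𝔽_{p^n} with T_d^n(δ) = 1 and any δ₁ ∈ 𝔽_{p^d} with T_{2e}^{2d}(δ₁) = 1, setting y₀ = Σ_{i=0}^{n/d−2} Σ_{j=i+1}^{n/d−1} (−1)^i δ^{p^{kj}} (T_l^{2l}(a))^{p^{ki}}, the element x₀ = y₀ + (L/(2k))·S_d^{2d}((a − S_l^k(y₀))·δ₁) lies in 𝔽_{p^n} and satisfies S_l^k(x₀) = a, where L/(2k) denotes the element (2k/L)^{−1} in 𝔽_p. -/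
/-!
Write `φ_t x = x ^ p ^ t`. Telescoping gives `S_u^v x + φ_u (S_u^v x) = x - (-1)^(v/u) φ_v x`.
If `S_l^k x = a`, then `a + φ_l a = x + φ_k x`; applying `S_d^n`, and using that `z = S_d^n x`
satisfies `φ_d z = -z` (as `n/d` is even) and hence `φ_k z = -z` (as `k/d` is odd), the element
`c = S_d^n a` satisfies `φ_l c = -c`. As also `φ_n c = c`, `c²` is fixed by `φ_e`, so
`φ_e c = ±c`, and `φ_e c = c` would force `c = φ_l c = -c`. Hence `T_e^{2e} c = c + φ_e c = 0`.

Conversely, `T_e^{2e} c = 0` gives `φ_l c = -c`, so `b = T_l^{2l} a` satisfies `S_d^n b = 0`.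
Reindexing by the unit `k/d` modulo `n/d`, the additive Hilbert 90 element `y₀` then solves
`y₀ + φ_k y₀ = b`. The defect `u = a - S_l^k y₀` satisfies `φ_l u = -u`, hence by the same
argument `φ_d u = -u`, so `S_d^{2d} (u δ₁) = 2 u δ₁` and
`S_l^k (2 u δ₁) = 2 u T_l^k δ₁`, where `T_l^k δ₁ = k/L` because `i ↦ φ_{li} δ₁` has period
`d/e` and `l/e` is a unit modulo `d/e`.
-/

open Finset

/-- `Tmap p u v x = Σ_{i=0}^{v/u - 1} x^{p^{u i}}` on the algebraic closure of `𝔽_p`. -/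
noncomputable def Tmap (p : ℕ) [Fact p.Prime] (u v : ℕ) (x : AlgebraicClosure (ZMod p)) :
    AlgebraicClosure (ZMod p) :=
  ∑ i ∈ Finset.range (v / u), x ^ p ^ (u * i)

/-- `Smap p u v x = Σ_{i=0}^{v/u - 1} (-1)^i x^{p^{u i}}` on the algebraic closure of `𝔽_p`. -/
noncomputable def Smap (p : ℕ) [Fact p.Prime] (u v : ℕ) (x : AlgebraicClosure (ZMod p)) :
    AlgebraicClosure (ZMod p) :=
  ∑ i ∈ Finset.range (v / u), (-1 : AlgebraicClosure (ZMod p)) ^ i * x ^ p ^ (u * i)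

/-- `Ffield p m` is the subfield `𝔽_{p^m} = {x : x^{p^m} = x}` of the algebraic closure of `𝔽_p`. -/
def Ffield (p : ℕ) [Fact p.Prime] (m : ℕ) : Set (AlgebraicClosure (ZMod p)) :=
  {x | x ^ p ^ m = x}

open Function

lemma pow_pow_pow_pow {M : Type*} [Monoid M] (y : M) (p s t : ℕ) :
    (y ^ p ^ s) ^ p ^ t = y ^ p ^ (s + t) := by
  rw [← pow_mul, ← pow_add]

lemma periodic_pow_pow {M : Type*} [Monoid M] {p : ℕ} {x : M} {c m : ℕ}
    (hx : x ^ p ^ (c * m) = x) :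
    Periodic (fun i ↦ x ^ p ^ (c * i)) m := fun i ↦ by
  dsimp only
  rw [mul_add, add_comm, ← pow_pow_pow_pow, hx]

lemma periodic_neg_one_pow_mul_pow_pow {R : Type*} [Ring R] {p : ℕ} {x : R} {c m : ℕ}
    (hx : x ^ p ^ (c * m) = x) (hm : Even m) :
    Periodic (fun i ↦ (-1) ^ i * x ^ p ^ (c * i)) m := fun i ↦ by
  dsimp only
  rw [pow_add, hm.neg_one_pow, mul_one]
  exact congrArg _ (periodic_pow_pow hx i)

section Frobenius

variable {R : Type*} [CommRing R] {p : ℕ} [ExpChar R p] {x : R}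

lemma isPeriodicPt_frobenius_iff {n : ℕ} :
    IsPeriodicPt (frobenius R p) n x ↔ x ^ p ^ n = x := by
  rw [IsPeriodicPt, IsFixedPt, iterate_frobenius]

lemma pow_pow_mul_eq_self {c : ℕ} (hx : x ^ p ^ c = x) (s : ℕ) : x ^ p ^ (c * s) = x :=
  isPeriodicPt_frobenius_iff.1 ((isPeriodicPt_frobenius_iff.2 hx).mul_const s)

lemma pow_pow_gcd_eq_self {A B : ℕ} (hA : x ^ p ^ A = x) (hB : x ^ p ^ B = x) :
    x ^ p ^ A.gcd B = x :=
  isPeriodicPt_frobenius_iff.1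
    ((isPeriodicPt_frobenius_iff.2 hA).gcd (isPeriodicPt_frobenius_iff.2 hB))

lemma neg_one_pow_mul_pow_pow (m : ℕ) (y : R) (c : ℕ) :
    ((-1) ^ m * y) ^ p ^ c = (-1) ^ m * y ^ p ^ c := by
  rw [mul_pow, ← pow_mul (-1 : R), mul_comm m, pow_mul, neg_one_pow_expChar_pow, mul_comm]

lemma pow_pow_mul_of_eq_neg {c : ℕ} (hx : x ^ p ^ c = -x) (s : ℕ) :
    x ^ p ^ (c * s) = (-1) ^ s * x := by
  induction s with
  | zero => simp
  | succ s ih =>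
    rw [Nat.mul_succ, ← pow_pow_pow_pow, ih, neg_one_pow_mul_pow_pow, hx, pow_succ]
    ring

lemma pow_pow_mul_of_eq_neg_of_odd {c s : ℕ} (hx : x ^ p ^ c = -x) (hs : Odd s) :
    x ^ p ^ (c * s) = -x := by
  rw [pow_pow_mul_of_eq_neg hx, hs.neg_one_pow, neg_one_mul]

lemma sum_neg_one_pow_add_pow (y : R) (c m : ℕ) :
    ∑ i ∈ range m, (-1) ^ i * y ^ p ^ (c * i)
      + (∑ i ∈ range m, (-1) ^ i * y ^ p ^ (c * i)) ^ p ^ c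
      = y - (-1) ^ m * y ^ p ^ (c * m) := by
  induction m with
  | zero => simp [zero_pow (expChar_pow_pos R p c).ne']
  | succ m ih =>
    have hshift : (y ^ p ^ (c * m)) ^ p ^ c = y ^ p ^ (c * (m + 1)) := by
      rw [pow_pow_pow_pow, Nat.mul_succ]
    rw [sum_range_succ, add_pow_expChar_pow, neg_one_pow_mul_pow_pow, hshift, pow_succ]
    linear_combination ih

lemma sum_sum_neg_one_pow_add_pow (δ b : R) (k m : ℕ) :
    ∑ j ∈ range m, ∑ i ∈ range j, (-1) ^ i * δ ^ p ^ (k * j) * b ^ p ^ (k * i)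
      + (∑ j ∈ range m, ∑ i ∈ range j,
          (-1) ^ i * δ ^ p ^ (k * j) * b ^ p ^ (k * i)) ^ p ^ k
      = b * ∑ j ∈ range m, δ ^ p ^ (k * (j + 1))
        - δ ^ p ^ (k * m) * ∑ i ∈ range m, (-1) ^ i * b ^ p ^ (k * i) := by
  induction m with
  | zero => simp [zero_pow (expChar_pow_pos R p k).ne']
  | succ m ih =>
    have hrow : ∑ i ∈ range m, (-1) ^ i * δ ^ p ^ (k * m) * b ^ p ^ (k * i)
        = δ ^ p ^ (k * m) * ∑ i ∈ range m, (-1) ^ i * b ^ p ^ (k * i) := by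
      rw [mul_sum]
      exact sum_congr rfl fun i _ ↦ by ring
    have hshift : (δ ^ p ^ (k * m)) ^ p ^ k = δ ^ p ^ (k * (m + 1)) := by
      rw [pow_pow_pow_pow, Nat.mul_succ]
    rw [sum_range_succ, hrow, add_pow_expChar_pow, mul_pow, hshift, sum_range_succ,
      sum_range_succ _ m]
    linear_combination ih + δ ^ p ^ (k * (m + 1)) * sum_neg_one_pow_add_pow (p := p) b k m

lemma hilbert90_sum_add_pow {δ : R} {k m : ℕ} (hδ : δ ^ p ^ (k * m) = δ) (b : R) :
    ∑ i ∈ range (m - 1), ∑ j ∈ Ico (i + 1) m, (-1) ^ i * δ ^ p ^ (k * j) * b ^ p ^ (k * i)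
      + (∑ i ∈ range (m - 1), ∑ j ∈ Ico (i + 1) m,
          (-1) ^ i * δ ^ p ^ (k * j) * b ^ p ^ (k * i)) ^ p ^ k
      = b * ∑ j ∈ range m, δ ^ p ^ (k * j)
        - δ * ∑ i ∈ range m, (-1) ^ i * b ^ p ^ (k * i) := by
  have hswap : ∑ i ∈ range (m - 1), ∑ j ∈ Ico (i + 1) m,
      (-1) ^ i * δ ^ p ^ (k * j) * b ^ p ^ (k * i)
      = ∑ j ∈ range m, ∑ i ∈ range j, (-1) ^ i * δ ^ p ^ (k * j) * b ^ p ^ (k * i) :=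
    sum_comm' fun i j ↦ by simp only [mem_range, mem_Ico]; omega
  have hcycle :
      ∑ j ∈ range m, δ ^ p ^ (k * (j + 1)) = ∑ j ∈ range m, δ ^ p ^ (k * j) := by
    have := (sum_range_succ' (fun j ↦ δ ^ p ^ (k * j)) m).symm.trans
      (sum_range_succ (fun j ↦ δ ^ p ^ (k * j)) m)
    simpa [hδ] using this
  rw [hswap, sum_sum_neg_one_pow_add_pow, hcycle, hδ]

lemma pow_pow_gcd_eq_neg {K : Type*} [Field K] [ExpChar K p] (h2 : (2 : K) ≠ 0) {y : K}
    {A B : ℕ} (hA : y ^ p ^ A = y) (hB : y ^ p ^ B = -y) : y ^ p ^ A.gcd B = -y := by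
  have hsq : (y ^ 2) ^ p ^ A.gcd B = y ^ 2 := by
    refine pow_pow_gcd_eq_self ?_ ?_ <;> rw [← pow_mul, mul_comm, pow_mul] <;> simp [hA, hB]
  rw [← pow_mul, mul_comm, pow_mul] at hsq
  rcases sq_eq_sq_iff_eq_or_eq_neg.1 hsq with h | h
  · have hy : y = 0 := by
      have := pow_pow_mul_eq_self h (B / A.gcd B)
      rw [Nat.mul_div_cancel' (Nat.gcd_dvd_right A B), hB] at this
      exact (mul_eq_zero.1 (by linear_combination -this : (2 : K) * y = 0)).resolve_left h2
    simp [hy, zero_pow (expChar_pow_pos K p _).ne']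
  · exact h

end Frobenius

section PeriodicSum

variable {M : Type*} [AddCommMonoid M] {f : ℕ → M} {D : ℕ}

lemma Function.Periodic.sum_range_mul (hf : Periodic f D) (B : ℕ) :
    ∑ i ∈ range (B * D), f i = B • ∑ i ∈ range D, f i := by
  induction B with
  | zero => simp
  | succ B ih =>
    rw [Nat.succ_mul, sum_range_add, ih, succ_nsmul]
    congr 1
    exact sum_congr rfl fun i _ ↦ by simpa [add_comm] using hf.nat_mul B i

lemma Function.Periodic.sum_range_comp_mul (hf : Periodic f D) {A : ℕ} (hA : A.Coprime D) :
    ∑ i ∈ range D, f (A * i) = ∑ i ∈ range D, f i := by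
  have hinj : Set.InjOn (fun i ↦ A * i % D) (range D) := fun i hi j hj hij ↦ by
    have := Nat.ModEq.cancel_left_of_coprime hA.symm hij
    rwa [Nat.ModEq, Nat.mod_eq_of_lt (mem_range.1 hi), Nat.mod_eq_of_lt (mem_range.1 hj)] at this
  have himage : (range D).image (fun i ↦ A * i % D) = range D := by
    refine eq_of_subset_of_card_le (fun j hj ↦ ?_) (card_image_of_injOn hinj).ge
    obtain ⟨i, hi, rfl⟩ := mem_image.1 hj
    exact mem_range.2 (Nat.mod_lt _ (Nat.zero_lt_of_lt (mem_range.1 hi)))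
  conv_rhs => rw [← himage, sum_image hinj]
  exact sum_congr rfl fun i _ ↦ (hf.map_mod_nat _).symm

end PeriodicSum

namespace Nat

variable {n k l d : ℕ}

lemma odd_div_gcd_of_even_div_gcd (hn : 0 < n) (h : Even (n / n.gcd k)) : Odd (k / n.gcd k) :=
  coprime_two_left.1 ((coprime_div_gcd_div_gcd (gcd_pos_of_pos_left k hn)).coprime_dvd_left
    (even_iff_two_dvd.1 h))

lemma even_div_gcd_of_dvd (hlk : l ∣ k) (h : Even (n / n.gcd k)) : Even (n / n.gcd l) := by
  rw [← Nat.div_mul_div (gcd_dvd_left n k) (gcd_dvd_gcd_of_dvd_right n hlk)]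
  exact h.mul_right _

lemma odd_gcd_div_gcd (hn : 0 < n) (hlk : l ∣ k) (hkl : Odd (k / l))
    (hnd : Even (n / n.gcd k)) : Odd (n.gcd k / n.gcd l) :=
  (Nat.div_mul_div hlk (gcd_dvd_right n l) ▸ hkl.mul
    (odd_div_gcd_of_even_div_gcd hn (even_div_gcd_of_dvd hlk hnd))).of_dvd_nat
    (Nat.div_dvd_div (gcd_dvd_gcd_of_dvd_right n hlk) (gcd_dvd_right n k))

lemma gcd_gcd_of_dvd (hlk : l ∣ k) : (n.gcd k).gcd l = n.gcd l := by
  rw [Nat.gcd_assoc, Nat.gcd_eq_right hlk]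

lemma div_eq_div_lcm_mul (hdk : d ∣ k) (hlk : l ∣ k) : k / l = k / d.lcm l * (d / d.gcd l) := by
  rcases l.eq_zero_or_pos with rfl | hl
  · simp
  rw [← Nat.div_mul_div (Nat.lcm_dvd hdk hlk) (dvd_lcm_right d l), Nat.lcm,
    Nat.mul_div_right_comm (Nat.gcd_dvd_left d l), Nat.mul_div_cancel _ hl]

end Nat

section AlgClosed

open Polynomial

variable {K : Type*} [Field K] [IsAlgClosed K] {p : ℕ} [Fact p.Prime] [CharP K p]

-- `∑_{i<r} X^{p^{ui}}` has degree `< p^{ur}`, the number of roots of `X^{p^{ur}} - X`.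
lemma exists_sum_pow_pow_ne_zero {u r : ℕ} (hu : 0 < u) (hr : 0 < r) :
    ∃ w : K, w ^ p ^ (u * r) = w ∧ ∑ i ∈ range r, w ^ p ^ (u * i) ≠ 0 := by
  have hp : 1 < p := (Fact.out : p.Prime).one_lt
  by_contra! h
  set Q : K[X] := ∑ i ∈ range r, X ^ p ^ (u * i)
  have hfix : Fintype.card ((X ^ p ^ (u * r) - X : K[X]).rootSet K) = p ^ (u * r) := by
    rw [card_rootSet_eq_natDegree (galois_poly_separable p _ (dvd_pow_self p (by positivity)))
      (by simpa using IsAlgClosed.splits _),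
      FiniteField.X_pow_card_pow_sub_X_natDegree_eq K (by positivity) hp]
  have hQ : Q = 0 := by
    refine eq_zero_of_natDegree_lt_card_of_eval_eq_zero
      (ι := (X ^ p ^ (u * r) - X : K[X]).rootSet K) Q Subtype.val_injective
      (fun ⟨w, hw⟩ ↦ ?_) ?_
    · simp only [mem_rootSet, map_sub, map_pow, aeval_X, sub_eq_zero] at hw
      simpa [Q, eval_finsetSum] using h w hw.2
    · rw [hfix]
      refine (natDegree_sum_le_of_forall_le _ _ (n := p ^ (u * (r - 1))) fun i hi ↦ ?_).trans_lt
        ?_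
      · rw [natDegree_X_pow]
        exact Nat.pow_le_pow_right (by omega) (Nat.mul_le_mul_left u (by simp at hi; omega))
      · exact Nat.pow_lt_pow_right hp (Nat.mul_lt_mul_of_pos_left (by omega) hu)
  have hcoeff : Q.coeff 1 = 1 := by
    rw [finsetSum_coeff, sum_eq_single 0]
    · simp
    · intro i _ hi
      rw [coeff_X_pow, if_neg (Nat.one_lt_pow (mul_ne_zero hu.ne' hi) hp).ne]
    · simp [hr]
  simp [hQ] at hcoeff

lemma exists_sum_pow_pow_eq_one {u r : ℕ} (hu : 0 < u) (hr : 0 < r) :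
    ∃ δ : K, δ ^ p ^ (u * r) = δ ∧ ∑ i ∈ range r, δ ^ p ^ (u * i) = 1 := by
  obtain ⟨w, hw, hs⟩ := exists_sum_pow_pow_ne_zero (K := K) (p := p) hu hr
  set s := ∑ i ∈ range r, w ^ p ^ (u * i)
  have hsu : s ^ p ^ u = s := by
    have hcycle := (sum_range_succ' (fun i ↦ w ^ p ^ (u * i)) r).symm.trans
      (sum_range_succ (fun i ↦ w ^ p ^ (u * i)) r)
    simp only [mul_zero, pow_zero, pow_one, hw] at hcycle
    rw [sum_pow_char_pow]
    simpa [pow_pow_pow_pow, mul_add, add_comm] using hcycle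
  refine ⟨w * s⁻¹, ?_, ?_⟩
  · rw [mul_pow, inv_pow, hw, pow_pow_mul_eq_self hsu]
  · simp_rw [mul_pow, inv_pow, pow_pow_mul_eq_self hsu, ← sum_mul]
    exact mul_inv_cancel₀ hs

end AlgClosed

section Smap

variable {p : ℕ} [Fact p.Prime]

local notation "𝔽" => AlgebraicClosure (ZMod p)

lemma two_ne_zero_of_ne_two (hp2 : p ≠ 2) : (2 : 𝔽) ≠ 0 :=
  Ring.two_ne_zero (by rwa [ringChar.eq 𝔽 p])

noncomputable def Ffield.subfield (p : ℕ) [Fact p.Prime] (n : ℕ) :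
    Subfield (AlgebraicClosure (ZMod p)) :=
  (iterateFrobenius _ p n).eqLocusField (RingHom.id _)

lemma Smap_add (u v : ℕ) (x y : 𝔽) : Smap p u v (x + y) = Smap p u v x + Smap p u v y := by
  simp only [Smap, add_pow_expChar_pow, mul_add, sum_add_distrib]

lemma Smap_pow_pow (u v t : ℕ) (x : 𝔽) : Smap p u v (x ^ p ^ t) = Smap p u v x ^ p ^ t := by
  simp only [Smap, sum_pow_char_pow, neg_one_pow_mul_pow_pow, pow_pow_pow_pow, add_comm t]

lemma Smap_pow_pow_eq_self {n : ℕ} {x : 𝔽} (hx : x ^ p ^ n = x) (u v : ℕ) :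
    Smap p u v x ^ p ^ n = Smap p u v x := by
  rw [← Smap_pow_pow, hx]

lemma Smap_add_pow_pow {u v : ℕ} (huv : u ∣ v) (x : 𝔽) :
    Smap p u v x + Smap p u v x ^ p ^ u = x - (-1) ^ (v / u) * x ^ p ^ v := by
  rw [Smap, sum_neg_one_pow_add_pow, Nat.mul_div_cancel' huv]

lemma Smap_pow_pow_eq_neg {u v : ℕ} (huv : u ∣ v) (hvu : Even (v / u)) {x : 𝔽}
    (hx : x ^ p ^ v = x) : Smap p u v x ^ p ^ u = -Smap p u v x := by
  have h := Smap_add_pow_pow huv x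
  rw [hvu.neg_one_pow, one_mul, hx, sub_self] at h
  linear_combination h

lemma Smap_mul_of_pow_pow_eq_neg {u : ℕ} {c : 𝔽} (hc : c ^ p ^ u = -c) (v : ℕ) (x : 𝔽) :
    Smap p u v (c * x) = c * Tmap p u v x := by
  simp only [Smap, Tmap, mul_sum, mul_pow, pow_pow_mul_of_eq_neg hc]
  refine sum_congr rfl fun i _ ↦ ?_
  rw [← mul_assoc, ← mul_assoc, ← pow_add, ← two_mul, pow_mul, neg_one_sq, one_pow, one_mul]

lemma Smap_two_mul {u : ℕ} (hu : 0 < u) (x : 𝔽) : Smap p u (2 * u) x = x - x ^ p ^ u := by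
  simp [Smap, Nat.mul_div_cancel _ hu, sum_range_succ, sub_eq_add_neg]

lemma Tmap_two_mul {u : ℕ} (hu : 0 < u) (x : 𝔽) : Tmap p u (2 * u) x = x + x ^ p ^ u := by
  simp [Tmap, Nat.mul_div_cancel _ hu, sum_range_succ]

lemma exists_Tmap_eq_one {u v : ℕ} (hu : 0 < u) (huv : u ∣ v) (hv : 0 < v) :
    ∃ δ ∈ Ffield p v, Tmap p u v δ = 1 := by
  obtain ⟨δ, hδ, h1⟩ :=
    exists_sum_pow_pow_eq_one (K := 𝔽) (p := p) hu (Nat.div_pos (Nat.le_of_dvd hv huv) hu)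
  rw [Nat.mul_div_cancel' huv] at hδ
  exact ⟨δ, hδ, h1⟩

lemma Tmap_two_mul_two_mul {e d : ℕ} (hed : e ∣ d) (hD : Odd (d / e)) {δ : 𝔽}
    (hδ : δ ∈ Ffield p d) : Tmap p (2 * e) (2 * d) δ = Tmap p e d δ := by
  have hf : Periodic (fun i ↦ δ ^ p ^ (e * i)) (d / e) :=
    periodic_pow_pow (by rwa [Nat.mul_div_cancel' hed])
  rw [Tmap, Nat.mul_div_mul_left _ _ two_pos]
  refine (sum_congr rfl fun i _ ↦ ?_).trans (hf.sum_range_comp_mul (Nat.coprime_two_left.2 hD))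
  rw [mul_assoc, mul_left_comm]

lemma Tmap_eq_div_lcm {d l k : ℕ} (hd : 0 < d) (hdk : d ∣ k) (hlk : l ∣ k) {δ : 𝔽}
    (hδ : δ ∈ Ffield p d) (h1 : Tmap p (d.gcd l) d δ = 1) :
    Tmap p l k δ = (k / d.lcm l : ℕ) := by
  set e := d.gcd l
  have hed : e * (d / e) = d := Nat.mul_div_cancel' (Nat.gcd_dvd_left d l)
  have hel : e * (l / e) = l := Nat.mul_div_cancel' (Nat.gcd_dvd_right d l)
  have hperiod : δ ^ p ^ (l * (d / e)) = δ := by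
    rw [← hel, mul_right_comm, hed]
    exact pow_pow_mul_eq_self hδ _
  calc Tmap p l k δ = ∑ i ∈ range (k / d.lcm l * (d / e)), δ ^ p ^ (l * i) := by
        rw [Tmap, Nat.div_eq_div_lcm_mul hdk hlk]
    _ = (k / d.lcm l) • ∑ i ∈ range (d / e), δ ^ p ^ (e * (l / e * i)) := by
        rw [(periodic_pow_pow hperiod).sum_range_mul]
        simp only [← mul_assoc, hel]
    _ = (k / d.lcm l : ℕ) := by
        rw [(periodic_pow_pow (p := p) (by rwa [hed])).sum_range_comp_mul
          (Nat.coprime_div_gcd_div_gcd (Nat.gcd_pos_of_pos_left l hd)).symm]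
        rw [← nsmul_one]
        exact congrArg _ h1

lemma Smap_Smap_pow_pow_gcd_eq_neg (hp2 : p ≠ 2) {n k l d : ℕ} (hdn : d ∣ n)
    (hnd : Even (n / d)) (hdk : d ∣ k) (hkd : Odd (k / d)) (hlk : l ∣ k) (hkl : Odd (k / l))
    {x : 𝔽} (hx : x ^ p ^ n = x) :
    Smap p d n (Smap p l k x) ^ p ^ n.gcd l = -Smap p d n (Smap p l k x) := by
  have hz : Smap p d n x ^ p ^ k = -Smap p d n x := by
    rw [← Nat.mul_div_cancel' hdk]
    exact pow_pow_mul_of_eq_neg_of_odd (Smap_pow_pow_eq_neg hdn hnd hx) hkd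
  have hlk' : Smap p l k x + Smap p l k x ^ p ^ l = x + x ^ p ^ k := by
    rw [Smap_add_pow_pow hlk, hkl.neg_one_pow]
    ring
  have hc := congrArg (Smap p d n) hlk'
  rw [Smap_add, Smap_add, Smap_pow_pow, Smap_pow_pow, hz, add_neg_cancel] at hc
  exact pow_pow_gcd_eq_neg (two_ne_zero_of_ne_two hp2)
    (Smap_pow_pow_eq_self (Smap_pow_pow_eq_self hx l k) d n) (by linear_combination hc)

lemma hilbert90_add_pow_eq {n k d : ℕ} (hdn : d ∣ n) (hnd : Even (n / d)) (hdk : d ∣ k)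
    (hkd : Odd (k / d)) (hcop : (k / d).Coprime (n / d)) {δ b : 𝔽} (hδ : δ ^ p ^ n = δ)
    (hδ1 : Tmap p d n δ = 1) (hb : b ^ p ^ n = b) (hSb : Smap p d n b = 0) :
    ∑ i ∈ range (n / d - 1), ∑ j ∈ Ico (i + 1) (n / d),
        (-1) ^ i * δ ^ p ^ (k * j) * b ^ p ^ (k * i)
      + (∑ i ∈ range (n / d - 1), ∑ j ∈ Ico (i + 1) (n / d),
        (-1) ^ i * δ ^ p ^ (k * j) * b ^ p ^ (k * i)) ^ p ^ k = b := by
  have hdm : d * (n / d) = n := Nat.mul_div_cancel' hdn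
  have hkj (j : ℕ) : k * j = d * (k / d * j) := by rw [← mul_assoc, Nat.mul_div_cancel' hdk]
  have hT : ∑ j ∈ range (n / d), δ ^ p ^ (k * j) = 1 := by
    simp_rw [hkj]
    exact ((periodic_pow_pow (by rwa [hdm])).sum_range_comp_mul hcop).trans hδ1
  have hS : ∑ i ∈ range (n / d), (-1) ^ i * b ^ p ^ (k * i) = 0 := by
    refine (sum_congr rfl fun i _ ↦ ?_).trans
      (((periodic_neg_one_pow_mul_pow_pow (by rwa [hdm]) hnd).sum_range_comp_mul hcop).trans hSb)
    rw [pow_mul (-1 : 𝔽), hkd.neg_one_pow, hkj]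
  have hkm : δ ^ p ^ (k * (n / d)) = δ := by
    rw [← Nat.mul_div_cancel' hdk, mul_right_comm, hdm]
    exact pow_pow_mul_eq_self hδ _
  rw [hilbert90_sum_add_pow hkm, hT, hS]
  ring

lemma pow_pow_sub_Smap_eq_neg {l k : ℕ} (hlk : l ∣ k) (hkl : Odd (k / l)) {a y : 𝔽}
    (hy : y + y ^ p ^ k = a + a ^ p ^ l) :
    (a - Smap p l k y) ^ p ^ l = -(a - Smap p l k y) := by
  have h := Smap_add_pow_pow hlk y
  rw [hkl.neg_one_pow] at h
  rw [sub_pow_expChar_pow]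
  linear_combination -hy - h

lemma Smap_inv_mul_Smap_two_mul_eq (hp2 : p ≠ 2) {k l d : ℕ} (hd : 0 < d) (hdk : d ∣ k)
    (hlk : l ∣ k) (hpk : ¬ p ∣ k / d.lcm l) {u : 𝔽} (hul : u ^ p ^ l = -u)
    (hud : u ^ p ^ d = -u) {δ₁ : 𝔽} (hδ₁ : δ₁ ∈ Ffield p d)
    (h1 : Tmap p (d.gcd l) d δ₁ = 1) :
    Smap p l k (((2 * (k / d.lcm l) : ℕ) : 𝔽)⁻¹ * Smap p d (2 * d) (u * δ₁)) = u := by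
  have hN : ((2 * (k / d.lcm l) : ℕ) : 𝔽) ≠ 0 := by
    rw [Ne, CharP.cast_eq_zero_iff 𝔽 p, (Fact.out : p.Prime).dvd_mul, not_or]
    exact ⟨fun h ↦ hp2 ((Nat.prime_dvd_prime_iff_eq Fact.out Nat.prime_two).1 h), hpk⟩
  have hnat (m : ℕ) : (m : 𝔽) ^ p ^ l = m := map_natCast (iterateFrobenius 𝔽 p l) m
  set C : 𝔽 := ((2 * (k / d.lcm l) : ℕ) : 𝔽)⁻¹
  have hCu : (C * (2 * u)) ^ p ^ l = -(C * (2 * u)) := by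
    rw [mul_pow, mul_pow, hul, inv_pow, hnat, show (2 : 𝔽) ^ p ^ l = 2 by simpa using hnat 2]
    ring
  rw [Smap_two_mul hd, mul_pow, hud, hδ₁, show u * δ₁ - -u * δ₁ = 2 * u * δ₁ by ring,
    ← mul_assoc, Smap_mul_of_pow_pow_eq_neg hCu, Tmap_eq_div_lcm hd hdk hlk hδ₁ h1]
  have hCN : C * (2 * (k / d.lcm l : ℕ)) = 1 := by simpa [C] using inv_mul_cancel₀ hN
  linear_combination u * hCN

lemma hilbert90_mem_and_add_pow_eq {n k l d e : ℕ} (hn : 0 < n) (hl : 0 < l) (hlk : l ∣ k)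
    (hd : d = n.gcd k) (he : e = n.gcd l) (hnd : Even (n / d)) {a : 𝔽} (ha : a ∈ Ffield p n)
    (H : Tmap p e (2 * e) (Smap p d n a) = 0) {δ : 𝔽} (hδ : δ ∈ Ffield p n)
    (hδ1 : Tmap p d n δ = 1) {y₀ : 𝔽}
    (hy₀ : y₀ = ∑ i ∈ range (n / d - 1), ∑ j ∈ Ico (i + 1) (n / d),
      (-1) ^ i * δ ^ p ^ (k * j) * (Tmap p l (2 * l) a) ^ p ^ (k * i)) :
    y₀ ∈ Ffield p n ∧ y₀ + y₀ ^ p ^ k = a + a ^ p ^ l := by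
  subst hd he hy₀
  have hc : Smap p (n.gcd k) n a ^ p ^ l = -Smap p (n.gcd k) n a := by
    rw [Tmap_two_mul (Nat.gcd_pos_of_pos_left l hn)] at H
    rw [← Nat.mul_div_cancel' (Nat.gcd_dvd_right n l)]
    exact pow_pow_mul_of_eq_neg_of_odd (by linear_combination H)
      (Nat.odd_div_gcd_of_even_div_gcd hn (Nat.even_div_gcd_of_dvd hlk hnd))
  have hb : Tmap p l (2 * l) a = a + a ^ p ^ l := Tmap_two_mul hl a
  have hbn : Tmap p l (2 * l) a ∈ Ffield.subfield p n := hb ▸ add_mem ha (pow_mem ha _)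
  refine ⟨sum_mem fun i _ ↦ sum_mem fun j _ ↦
    mul_mem (mul_mem (pow_mem (neg_mem (one_mem _)) _) (pow_mem hδ _)) (pow_mem hbn _), ?_⟩
  rw [← hb]
  refine hilbert90_add_pow_eq (Nat.gcd_dvd_left n k) hnd (Nat.gcd_dvd_right n k)
    (Nat.odd_div_gcd_of_even_div_gcd hn hnd)
    (Nat.coprime_div_gcd_div_gcd (Nat.gcd_pos_of_pos_left k hn)).symm hδ hδ1 hbn ?_
  rw [hb, Smap_add, Smap_pow_pow, hc, add_neg_cancel]

lemma Smap_eq_of_Tmap_Smap_eq_zero (hp2 : p ≠ 2) {n k l d e L : ℕ} (hn : 0 < n) (hl : 0 < l)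
    (hlk : l ∣ k) (hkl : Odd (k / l)) (hd : d = n.gcd k) (he : e = n.gcd l) (hL : L = d.lcm l)
    (hnd : Even (n / d)) (hpk : ¬ p ∣ k / L) {a : 𝔽} (ha : a ∈ Ffield p n)
    (H : Tmap p e (2 * e) (Smap p d n a) = 0) {δ : 𝔽} (hδ : δ ∈ Ffield p n)
    (hδ1 : Tmap p d n δ = 1) {δ₁ : 𝔽} (hδ₁ : δ₁ ∈ Ffield p d)
    (hδ₁1 : Tmap p (2 * e) (2 * d) δ₁ = 1) {y₀ : 𝔽}
    (hy₀ : y₀ = ∑ i ∈ range (n / d - 1), ∑ j ∈ Ico (i + 1) (n / d),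
      (-1) ^ i * δ ^ p ^ (k * j) * (Tmap p l (2 * l) a) ^ p ^ (k * i)) {x₀ : 𝔽}
    (hx₀ : x₀ = y₀ + ((2 * (k / L) : ℕ) : 𝔽)⁻¹ *
      Smap p d (2 * d) ((a - Smap p l k y₀) * δ₁)) :
    x₀ ∈ Ffield p n ∧ Smap p l k x₀ = a := by
  obtain ⟨hy₀n, hy⟩ := hilbert90_mem_and_add_pow_eq hn hl hlk hd he hnd ha H hδ hδ1 hy₀
  subst hd he hL hx₀
  have hed : n.gcd l ∣ n.gcd k := Nat.gcd_dvd_gcd_of_dvd_right n hlk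
  have hde : Odd (n.gcd k / n.gcd l) := Nat.odd_gcd_div_gcd hn hlk hkl hnd
  have hul := pow_pow_sub_Smap_eq_neg hlk hkl hy
  have hun : a - Smap p l k y₀ ∈ Ffield.subfield p n :=
    sub_mem ha (Smap_pow_pow_eq_self hy₀n l k)
  have hud : (a - Smap p l k y₀) ^ p ^ n.gcd k = -(a - Smap p l k y₀) := by
    rw [← Nat.mul_div_cancel' hed]
    exact pow_pow_mul_of_eq_neg_of_odd
      (pow_pow_gcd_eq_neg (two_ne_zero_of_ne_two hp2) hun hul) hde
  have hδ₁n : δ₁ ∈ Ffield.subfield p n := by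
    have := pow_pow_mul_eq_self hδ₁ (n / n.gcd k)
    rwa [Nat.mul_div_cancel' (Nat.gcd_dvd_left n k)] at this
  rw [Tmap_two_mul_two_mul hed hde hδ₁, ← Nat.gcd_gcd_of_dvd hlk] at hδ₁1
  refine ⟨(add_mem hy₀n (mul_mem (inv_mem (natCast_mem _ _))
    (Smap_pow_pow_eq_self (mul_mem hun hδ₁n) _ _)) : _ ∈ Ffield.subfield p n), ?_⟩
  rw [Smap_add, Smap_inv_mul_Smap_two_mul_eq hp2 (Nat.gcd_pos_of_pos_left k hn)
    (Nat.gcd_dvd_right n k) hlk hpk hul hud hδ₁ hδ₁1, add_sub_cancel]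

end Smap

theorem stmt18_general (p : ℕ) [Fact p.Prime] (hp2 : p ≠ 2) (n k l : ℕ)
    (hn : 0 < n) (hl : 0 < l)
    (hlk : l ∣ k) (hkl : Odd (k / l)) (d e L : ℕ)
    (hd : d = Nat.gcd n k) (he : e = Nat.gcd n l) (hL : L = Nat.lcm d l)
    (hnd : Even (n / d)) (hpk : ¬ p ∣ k / L)
    (a : AlgebraicClosure (ZMod p)) (ha : a ∈ Ffield p n) :
    ((∃ x ∈ Ffield p n, Smap p l k x = a) ↔ Tmap p e (2 * e) (Smap p d n a) = 0) ∧
    (Tmap p e (2 * e) (Smap p d n a) = 0 →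
      ∀ δ ∈ Ffield p n, Tmap p d n δ = 1 →
      ∀ δ₁ ∈ Ffield p d, Tmap p (2 * e) (2 * d) δ₁ = 1 →
      ∀ y₀, y₀ = ∑ i ∈ Finset.range (n / d - 1), ∑ j ∈ Finset.Ico (i + 1) (n / d),
          (-1 : AlgebraicClosure (ZMod p)) ^ i * δ ^ p ^ (k * j) *
            (Tmap p l (2 * l) a) ^ p ^ (k * i) →
      ∀ x₀, x₀ = y₀ + (((2 * (k / L) : ℕ) : AlgebraicClosure (ZMod p)))⁻¹ *
          Smap p d (2 * d) ((a - Smap p l k y₀) * δ₁) →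
        x₀ ∈ Ffield p n ∧ Smap p l k x₀ = a) := by
  subst hd he hL
  have hd0 := Nat.gcd_pos_of_pos_left k hn
  have he0 := Nat.gcd_pos_of_pos_left l hn
  have hed := Nat.gcd_dvd_gcd_of_dvd_right n hlk
  have solve := Smap_eq_of_Tmap_Smap_eq_zero hp2 hn hl hlk hkl rfl rfl rfl hnd hpk ha
  refine ⟨⟨?_, fun H ↦ ?_⟩, fun H δ hδ hδ1 δ₁ hδ₁ hδ₁1 y₀ hy₀ x₀ hx₀ ↦
    solve H hδ hδ1 hδ₁ hδ₁1 hy₀ hx₀⟩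
  · rintro ⟨x, hx, rfl⟩
    rw [Tmap_two_mul he0, Smap_Smap_pow_pow_gcd_eq_neg hp2 (Nat.gcd_dvd_left n k) hnd
      (Nat.gcd_dvd_right n k) (Nat.odd_div_gcd_of_even_div_gcd hn hnd) hlk hkl hx, add_neg_cancel]
  · obtain ⟨δ, hδ, hδ1⟩ := exists_Tmap_eq_one (p := p) hd0 (Nat.gcd_dvd_left n k) hn
    obtain ⟨δ₁, hδ₁, hδ₁1⟩ := exists_Tmap_eq_one (p := p) he0 hed hd0
    rw [← Tmap_two_mul_two_mul hed (Nat.odd_gcd_div_gcd hn hlk hkl hnd) hδ₁] at hδ₁1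
    obtain ⟨hmem, hsol⟩ := solve H hδ hδ1 hδ₁ hδ₁1 rfl rfl
    exact ⟨_, hmem, hsol⟩

theorem stmt18 (p : ℕ) [Fact p.Prime] (hp2 : p ≠ 2) (n k l : ℕ)
    (hn : 0 < n) (hk : 0 < k) (hl : 0 < l)
    (hlk : l ∣ k) (hkl : Odd (k / l)) (d e L : ℕ)
    (hd : d = Nat.gcd n k) (he : e = Nat.gcd n l) (hL : L = Nat.lcm d l)
    (hnd : Even (n / d)) (hpk : ¬ p ∣ k / L)
    (a : AlgebraicClosure (ZMod p)) (ha : a ∈ Ffield p n) :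
    ((∃ x ∈ Ffield p n, Smap p l k x = a) ↔ Tmap p e (2 * e) (Smap p d n a) = 0) ∧
    (Tmap p e (2 * e) (Smap p d n a) = 0 →
      ∀ δ ∈ Ffield p n, Tmap p d n δ = 1 →
      ∀ δ₁ ∈ Ffield p d, Tmap p (2 * e) (2 * d) δ₁ = 1 →
      ∀ y₀, y₀ = ∑ i ∈ Finset.range (n / d - 1), ∑ j ∈ Finset.Ico (i + 1) (n / d),
          (-1 : AlgebraicClosure (ZMod p)) ^ i * δ ^ p ^ (k * j) *
            (Tmap p l (2 * l) a) ^ p ^ (k * i) →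
      ∀ x₀, x₀ = y₀ + (((2 * (k / L) : ℕ) : AlgebraicClosure (ZMod p)))⁻¹ *
          Smap p d (2 * d) ((a - Smap p l k y₀) * δ₁) →
        x₀ ∈ Ffield p n ∧ Smap p l k x₀ = a) :=
  stmt18_general p hp2 n k l hn hl hlk hkl d e L hd he hL hnd hpk a ha
end

section
/- Let p be an odd prime, let n, k, l be positive integers with l | k and k/l odd, and set d = gcd(n,k). Suppose n/d is odd. Then for every a ∈ 𝔽_{p^n}, the equation S_l^k(X) = a has a unique solution in 𝔽_{p^n}, given explicitly by x₀ = (1/2)·T_l^{2l}(S_k^{lcm(n,k)}(a)); in particular, S_l^k is a bijection of 𝔽_{p^n}. -/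
open Finset

/-!
Let `σ` be the Frobenius. On `𝔽_{p^n}` the maps `S_u^v` and `T_u^{2u} = 1 + σ^u` are polynomials in
`σ` with `𝔽_p` coefficients, so they commute with each other and with `σ`. Since `v/u` is odd,
`S_u^v ∘ (σ^u + 1)` telescopes to `σ^v + 1`. Applying this with `(u, v) = (l, k)` and `(k, lcm n k)`
(odd because `lcm n k / k = n / gcd n k`) gives `S_l^k ∘ T_l^{2l} ∘ S_k^{lcm n k} = σ^{lcm n k} + 1`,
which is `2` on `𝔽_{p^n}`; as `p` is odd, `½ T_l^{2l} ∘ S_k^{lcm n k}` is a two-sided inverse of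
`S_l^k` there.
-/

namespace Ffield

variable {p : ℕ} [Fact p.Prime] {m : ℕ} {a : AlgebraicClosure (ZMod p)}

theorem pow_prime_pow_of_dvd {j : ℕ} (hmj : m ∣ j) (ha : a ∈ Ffield p m) : a ^ p ^ j = a := by
  obtain ⟨t, rfl⟩ := hmj
  induction t with
  | zero => simp
  | succ t ih => rw [Nat.mul_succ, pow_add, pow_mul, ih]; exact ha

theorem inv_two_mem (m : ℕ) : (2 : AlgebraicClosure (ZMod p))⁻¹ ∈ Ffield p m := by
  change _ ^ p ^ m = _
  rw [← iterateFrobenius_def p m, map_inv₀, map_ofNat]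

theorem mul_mem {b : AlgebraicClosure (ZMod p)} (ha : a ∈ Ffield p m) (hb : b ∈ Ffield p m) :
    a * b ∈ Ffield p m :=
  (mul_pow a b _).trans (congrArg₂ _ ha hb)

end Ffield

section FrobeniusPolynomials

variable {p : ℕ} [Fact p.Prime] (u v : ℕ) (x y : AlgebraicClosure (ZMod p))

theorem smap_pow_prime_pow (j : ℕ) : Smap p u v x ^ p ^ j = Smap p u v (x ^ p ^ j) := by
  simp only [Smap, ← iterateFrobenius_def p j, map_sum, map_mul, map_pow, map_neg, map_one]

theorem tmap_pow_prime_pow (j : ℕ) : Tmap p u v x ^ p ^ j = Tmap p u v (x ^ p ^ j) := by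
  simp only [Tmap, ← iterateFrobenius_def p j, map_sum, map_pow]

theorem smap_add : Smap p u v (x + y) = Smap p u v x + Smap p u v y := by
  simp only [Smap, add_pow_char_pow, mul_add, sum_add_distrib]

theorem smap_mul_of_mem_ffield_one {c : AlgebraicClosure (ZMod p)} (hc : c ∈ Ffield p 1) :
    Smap p u v (c * x) = c * Smap p u v x := by
  simp only [Smap, mul_sum, mul_pow, Ffield.pow_prime_pow_of_dvd (one_dvd _) hc]
  exact sum_congr rfl fun _ _ => by ring

theorem tmap_two_mul {u : ℕ} (hu : 0 < u) : Tmap p u (2 * u) x = x + x ^ p ^ u := by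
  simp [Tmap, Nat.mul_div_cancel _ hu, sum_range_succ]

theorem smap_mem_ffield {m : ℕ} (hx : x ∈ Ffield p m) : Smap p u v x ∈ Ffield p m :=
  (smap_pow_prime_pow u v x m).trans (congrArg _ hx)

theorem tmap_mem_ffield {m : ℕ} (hx : x ∈ Ffield p m) : Tmap p u v x ∈ Ffield p m :=
  (tmap_pow_prime_pow u v x m).trans (congrArg _ hx)

theorem smap_pow_add_self {u v : ℕ} (huv : u ∣ v) (hodd : Odd (v / u)) :
    Smap p u v (x ^ p ^ u + x) = x ^ p ^ v + x := by
  set g : ℕ → AlgebraicClosure (ZMod p) := fun i => (-1) ^ i * x ^ p ^ (u * i) with hg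
  have hterm : ∀ i, (-1) ^ i * (x ^ p ^ u + x) ^ p ^ (u * i) = g i - g (i + 1) := fun i => by
    simp only [hg]
    rw [add_pow_char_pow, ← pow_mul, ← pow_add, mul_add_one u i, add_comm (u * i) u, pow_succ]
    ring
  rw [Smap, sum_congr rfl fun i _ => hterm i, sum_range_sub', hg]
  simp only [pow_zero, mul_zero, one_mul, Nat.mul_div_cancel' huv, hodd.neg_one_pow]
  ring

theorem smap_tmap_two_mul_smap {u v w : ℕ} (huv : u ∣ v) (hvw : v ∣ w) (huv_odd : Odd (v / u))
    (hvw_odd : Odd (w / v)) :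
    Smap p u v (Tmap p u (2 * u) (Smap p v w x)) = x ^ p ^ w + x := by
  rw [tmap_two_mul _ (Nat.div_pos_iff.mp huv_odd.pos).1, add_comm,
    smap_pow_add_self _ huv huv_odd, smap_pow_prime_pow, ← smap_add,
    smap_pow_add_self _ hvw hvw_odd]

theorem tmap_two_mul_smap_smap {u v w : ℕ} (huv : u ∣ v) (hvw : v ∣ w) (huv_odd : Odd (v / u))
    (hvw_odd : Odd (w / v)) :
    Tmap p u (2 * u) (Smap p v w (Smap p u v x)) = x ^ p ^ w + x := by
  rw [tmap_two_mul _ (Nat.div_pos_iff.mp huv_odd.pos).1, smap_pow_prime_pow, smap_pow_prime_pow,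
    ← smap_add, ← smap_add, add_comm x, smap_pow_add_self _ huv huv_odd,
    smap_pow_add_self _ hvw hvw_odd]

end FrobeniusPolynomials

theorem Nat.lcm_div_right_eq_div_gcd (n : ℕ) {k : ℕ} (hk : 0 < k) :
    Nat.lcm n k / k = n / Nat.gcd n k := by
  rw [Nat.lcm, Nat.mul_div_right_comm (Nat.gcd_dvd_left n k), Nat.mul_div_cancel _ hk]

theorem stmt19_general (p : ℕ) [Fact p.Prime] (hp2 : p ≠ 2) (n k l : ℕ)
    (hlk : l ∣ k) (hkl : Odd (k / l)) (d : ℕ) (hd : d = Nat.gcd n k)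
    (hnd : Odd (n / d)) :
    (∀ a ∈ Ffield p n,
      ∀ x₀, x₀ = (2 : AlgebraicClosure (ZMod p))⁻¹ *
          Tmap p l (2 * l) (Smap p k (Nat.lcm n k) a) →
        x₀ ∈ Ffield p n ∧ Smap p l k x₀ = a ∧
        ∀ x ∈ Ffield p n, Smap p l k x = a → x = x₀) ∧
    Set.BijOn (Smap p l k) (Ffield p n) (Ffield p n) := by
  obtain ⟨hl, hle⟩ := Nat.div_pos_iff.mp hkl.pos
  have hkL : Odd (Nat.lcm n k / k) := by
    rwa [Nat.lcm_div_right_eq_div_gcd n (hl.trans_le hle), ← hd]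
  have h2 : (2 : AlgebraicClosure (ZMod p)) ≠ 0 := Ring.two_ne_zero (by rwa [ringChar.eq _ p])
  have hfix {x} (hx : x ∈ Ffield p n) : x ^ p ^ Nat.lcm n k + x = 2 * x := by
    rw [Ffield.pow_prime_pow_of_dvd (Nat.dvd_lcm_left n k) hx, two_mul]
  set Φ := fun a => (2 : AlgebraicClosure (ZMod p))⁻¹ * Tmap p l (2 * l) (Smap p k (Nat.lcm n k) a)
  have hmaps : Set.MapsTo (Smap p l k) (Ffield p n) (Ffield p n) := fun x hx =>
    smap_mem_ffield l k x hx
  have hmapsΦ : Set.MapsTo Φ (Ffield p n) (Ffield p n) := fun a ha =>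
    Ffield.mul_mem (Ffield.inv_two_mem n) (tmap_mem_ffield _ _ _ (smap_mem_ffield _ _ _ ha))
  have hright : Set.RightInvOn Φ (Smap p l k) (Ffield p n) := fun a ha => by
    simp only [Φ]
    rw [smap_mul_of_mem_ffield_one _ _ _ (Ffield.inv_two_mem 1),
      smap_tmap_two_mul_smap _ hlk (Nat.dvd_lcm_right n k) hkl hkL, hfix ha,
      inv_mul_cancel_left₀ h2]
  have hleft : Set.LeftInvOn Φ (Smap p l k) (Ffield p n) := fun x hx => by
    simp only [Φ]
    rw [tmap_two_mul_smap_smap _ hlk (Nat.dvd_lcm_right n k) hkl hkL, hfix hx,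
      inv_mul_cancel_left₀ h2]
  refine ⟨fun a ha x₀ hx₀ => ?_, Set.InvOn.bijOn ⟨hleft, hright⟩ hmaps hmapsΦ⟩
  subst hx₀
  exact ⟨hmapsΦ ha, hright ha, fun x hx hxa => hxa ▸ (hleft hx).symm⟩

theorem stmt19 (p : ℕ) [Fact p.Prime] (hp2 : p ≠ 2) (n k l : ℕ)
    (hn : 0 < n) (hk : 0 < k) (hl : 0 < l)
    (hlk : l ∣ k) (hkl : Odd (k / l)) (d : ℕ) (hd : d = Nat.gcd n k)
    (hnd : Odd (n / d)) :
    (∀ a ∈ Ffield p n,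
      ∀ x₀, x₀ = (2 : AlgebraicClosure (ZMod p))⁻¹ *
          Tmap p l (2 * l) (Smap p k (Nat.lcm n k) a) →
        x₀ ∈ Ffield p n ∧ Smap p l k x₀ = a ∧
        ∀ x ∈ Ffield p n, Smap p l k x = a → x = x₀) ∧
    Set.BijOn (Smap p l k) (Ffield p n) (Ffield p n) :=
  stmt19_general p hp2 n k l hlk hkl d hd hnd
end
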